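/- Full location recovery: suppose for each block index j, the adversary knows the set {v*_{k,j} − v_j : k ∈ K} of driver-rider block differences, and for each j this set has cardinality 2^l. Then the rider blocks v_j — and hence the rider coordinate S = ∑_j v_j 2^{jl} and every driver coordinate S*_k — are uniquely determined by these differences. -/

import Mathlib

theorem full_location_recovery (l m : ℕ) (hl : 1 ≤ l) (hm : 1 ≤ m)
    (K : Type*) [Fintype K] [Nonempty K]
    (v w : Fin m → ℕ) (vs us : K → Fin m → ℕ)
    (hv : ∀ j, v j < 2 ^ l) (hw : ∀ j, w j < 2 ^ l)
    (hvs : ∀ k j, vs k j < 2 ^ l) (hus : ∀ k j, us k j < 2 ^ l)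
    (hcard : ∀ j, (Finset.univ.image fun k => (vs k j : ℤ) - v j).card = 2 ^ l)
    (hconsistent : ∀ k j, (us k j : ℤ) - w j = (vs k j : ℤ) - v j) :
    w = v ∧ us = vs ∧
    (∑ j : Fin m, w j * 2 ^ ((j : ℕ) * l) = ∑ j : Fin m, v j * 2 ^ ((j : ℕ) * l)) ∧
    (∀ k, ∑ j : Fin m, us k j * 2 ^ ((j : ℕ) * l)
        = ∑ j : Fin m, vs k j * 2 ^ ((j : ℕ) * l)) := by
  have hwv : w = v := by
    funext j
    have hNpos : 0 < 2 ^ l := Nat.pow_pos (by norm_num)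
    have hNZ : (0:ℤ) < (2 ^ l : ℕ) := by exact_mod_cast hNpos
    set D := Finset.univ.image fun k => (vs k j : ℤ) - v j with hD
    have hsub : D ⊆ Finset.Icc (-(v j : ℤ)) ((2 ^ l : ℕ) - 1 - v j) := by
      intro x hx
      simp only [hD, Finset.mem_image] at hx
      obtain ⟨k, -, rfl⟩ := hx
      have h1 : (vs k j : ℤ) < (2 ^ l : ℕ) := by exact_mod_cast hvs k j
      have h2 : (0:ℤ) ≤ (vs k j : ℤ) := Int.ofNat_nonneg _
      rw [Finset.mem_Icc]
      omega
    have hcardIcc : (Finset.Icc (-(v j : ℤ)) ((2 ^ l : ℕ) - 1 - v j)).card = 2 ^ l := by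
      rw [Int.card_Icc]
      omega
    have hDeq : D = Finset.Icc (-(v j : ℤ)) ((2 ^ l : ℕ) - 1 - v j) :=
      Finset.eq_of_subset_of_card_le hsub (by rw [hcardIcc, hcard j])
    have hmem1 : -(v j : ℤ) ∈ D := by
      rw [hDeq, Finset.mem_Icc]; omega
    have hmem2 : ((2 ^ l : ℕ) : ℤ) - 1 - v j ∈ D := by
      rw [hDeq, Finset.mem_Icc]; omega
    simp only [hD, Finset.mem_image] at hmem1 hmem2
    obtain ⟨k1, -, e1⟩ := hmem1
    obtain ⟨k2, -, e2⟩ := hmem2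
    have c1 := hconsistent k1 j
    have c2 := hconsistent k2 j
    have b1 : (0:ℤ) ≤ (us k1 j : ℤ) := Int.ofNat_nonneg _
    have b2 : (us k2 j : ℤ) < (2 ^ l : ℕ) := by exact_mod_cast hus k2 j
    omega
  have huv : us = vs := by
    funext k j
    have c := hconsistent k j
    rw [hwv] at c
    omega
  exact ⟨hwv, huv, by rw [hwv], fun k => by rw [huv]⟩
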